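/- arXiv:2301.06162 — 2 statements merged into one kernel-verified Lean document; each statement's English description precedes it below -/
import Mathlib

section
/- (Convergence of minima of convex functions; the final step in the proof of Theorem 4.4.) Let D ⊆ ℝ^q be a nonempty open convex set. Let f_n : D → ℝ be convex functions converging pointwise on D to a convex function f : D → ℝ, and suppose f attains its infimum over D at a unique point x* ∈ D. Then inf_{x ∈ D} f_n(x) → f(x*) = inf_{x ∈ D} f(x) as n → ∞. -/
open Filter Topology Metric Set

lemma cube_hull (q : ℕ) (x₀ : Fin q → ℝ) {c : ℝ} (hc : 0 ≤ c) :
    Metric.closedBall x₀ c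
      = convexHull ℝ (Set.pi Set.univ fun i => ({x₀ i - c, x₀ i + c} : Set ℝ)) := by
  rw [convexHull_pi, closedBall_pi x₀ hc]
  exact congrArg _ (funext fun i => by
    rw [convexHull_pair, segment_eq_Icc (by linarith), Real.closedBall_eq_Icc])

lemma bound_on_ball {q : ℕ} {D : Set (Fin q → ℝ)} {g : (Fin q → ℝ) → ℝ}
    (hg : ConvexOn ℝ D g) {x₀ : Fin q → ℝ} {c : ℝ} (hc : 0 ≤ c)
    (hsub : Metric.closedBall x₀ c ⊆ D) {A : ℝ}
    (hA : ∀ v ∈ Set.pi Set.univ fun i => ({x₀ i - c, x₀ i + c} : Set ℝ), g v ≤ A) :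
    ∀ y ∈ Metric.closedBall x₀ c, |g y| ≤ |A| + 2 * |g x₀| := by
  set V := Set.pi Set.univ fun i => ({x₀ i - c, x₀ i + c} : Set ℝ) with hV
  have heq := cube_hull q x₀ hc
  have hVsub : V ⊆ Metric.closedBall x₀ c := by
    rw [heq]; exact subset_convexHull ℝ V
  have hupper : ∀ y ∈ Metric.closedBall x₀ c, g y ≤ A := by
    intro y hy
    rw [heq] at hy
    obtain ⟨v, hv, hle⟩ :=
      (hg.subset hsub (convex_closedBall _ _)).exists_ge_of_mem_convexHull hVsub hy
    exact hle.trans (hA v hv)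
  intro y hy
  have h1 : g y ≤ A := hupper y hy
  have hy' : x₀ + (x₀ - y) ∈ Metric.closedBall x₀ c := by
    have h : x₀ + (x₀ - y) - x₀ = x₀ - y := by abel
    rw [mem_closedBall, dist_eq_norm, h, norm_sub_rev]
    rw [mem_closedBall, dist_eq_norm] at hy
    exact hy
  have h2 : g (x₀ + (x₀ - y)) ≤ A := hupper _ hy'
  have hcomb : x₀ = (1/2 : ℝ) • y + (1/2 : ℝ) • (x₀ + (x₀ - y)) := by
    module
  have h3 : g x₀ ≤ (1/2 : ℝ) * g y + (1/2 : ℝ) * g (x₀ + (x₀ - y)) := by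
    have := hg.2 (hsub hy) (hsub hy') (by norm_num : (0:ℝ) ≤ 1/2)
      (by norm_num : (0:ℝ) ≤ 1/2) (by norm_num : (1:ℝ)/2 + 1/2 = 1)
    rw [← hcomb] at this
    simpa [smul_eq_mul] using this
  have hA1 := le_abs_self A
  have hA2 := neg_abs_le A
  have hg1 := le_abs_self (g x₀)
  have hg2 := neg_abs_le (g x₀)
  rw [abs_le]
  constructor <;> linarith

/-- Convergence of minima of convex functions; the final step in the proof of Theorem 4.4:
if convex functions `f n` on a nonempty open convex set `D ⊆ ℝ^q` converge pointwise on `D`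
to a convex function `flim` attaining its infimum over `D` at a unique point `xstar`, then
`inf_D (f n) → flim xstar = inf_D flim`. -/
theorem convex_min_convergence
    (q : ℕ) (D : Set (Fin q → ℝ))
    (hDne : D.Nonempty) (hDopen : IsOpen D) (hDconv : Convex ℝ D)
    (f : ℕ → (Fin q → ℝ) → ℝ) (flim : (Fin q → ℝ) → ℝ)
    (hfconv : ∀ n, ConvexOn ℝ D (f n))
    (hflimconv : ConvexOn ℝ D flim)
    (hptwise : ∀ x ∈ D, Tendsto (fun n => f n x) atTop (𝓝 (flim x)))
    (xstar : Fin q → ℝ) (hxD : xstar ∈ D)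
    (hmin : ∀ x ∈ D, flim xstar ≤ flim x)
    (huniq : ∀ y ∈ D, (∀ x ∈ D, flim y ≤ flim x) → y = xstar) :
    Tendsto (fun n => ⨅ x : D, f n x) atTop (𝓝 (flim xstar)) ∧
      flim xstar = ⨅ x : D, flim x := by
  haveI : Nonempty D := ⟨⟨xstar, hxD⟩⟩
  -- second conjunct
  have hinf_flim : flim xstar = ⨅ x : D, flim x := by
    refine le_antisymm (le_ciInf fun x => hmin x x.2) ?_
    have hbb : BddBelow (Set.range fun x : D => flim x) :=
      ⟨flim xstar, by rintro _ ⟨x, rfl⟩; exact hmin x x.2⟩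
    exact ciInf_le hbb ⟨xstar, hxD⟩
  refine ⟨?_, hinf_flim⟩
  -- eventual abs estimates from pointwise convergence
  have habs : ∀ x ∈ D, ∀ ε > 0, ∀ᶠ n in atTop, |f n x - flim x| < ε := by
    intro x hx ε hε
    obtain ⟨N, hN⟩ := Metric.tendsto_atTop.1 (hptwise x hx) ε hε
    exact eventually_atTop.2 ⟨N, fun n hn => by simpa [Real.dist_eq] using hN n hn⟩
  -- radius
  obtain ⟨ρ, hρ0, hρD⟩ := Metric.isOpen_iff.1 hDopen xstar hxD
  set R := ρ / 4 with hR
  have hR0 : 0 < R := by positivity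
  set c := 5 * R / 2 with hc
  have hc0 : 0 ≤ c := by positivity
  have hcBD : Metric.closedBall xstar c ⊆ D := by
    refine Subset.trans ?_ hρD
    intro y hy
    rw [mem_closedBall] at hy
    rw [mem_ball]
    calc dist y xstar ≤ c := hy
      _ < ρ := by rw [hc, hR]; linarith
  have hRc : Metric.closedBall xstar R ⊆ Metric.closedBall xstar c :=
    closedBall_subset_closedBall (by rw [hc]; linarith)
  -- vertex set
  set V := Set.pi Set.univ fun i => ({xstar i - c, xstar i + c} : Set ℝ) with hV
  have hVfin : V.Finite := Set.Finite.pi fun i => (Set.finite_singleton _).insert _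
  have hVsub : V ⊆ Metric.closedBall xstar c := by
    rw [cube_hull q xstar hc0]; exact subset_convexHull ℝ V
  have hVD : V ⊆ D := hVsub.trans hcBD
  -- uniform bound
  obtain ⟨M₀, hM₀⟩ : ∃ M₀, ∀ v ∈ V, flim v ≤ M₀ := by
    obtain ⟨M₀, hM₀⟩ := (hVfin.image flim).bddAbove
    exact ⟨M₀, fun v hv => hM₀ (Set.mem_image_of_mem flim hv)⟩
  set M := |M₀ + 1| + 2 * (|flim xstar| + 1) with hM
  have hM0 : 0 < M := by positivity
  have hflimB : ∀ y ∈ Metric.closedBall xstar c, |flim y| ≤ M := by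
    intro y hy
    have := bound_on_ball hflimconv hc0 hcBD (A := M₀ + 1)
      (fun v hv => by linarith [hM₀ v hv]) y hy
    have h1 := le_abs_self (flim xstar)
    rw [hM]; linarith
  have hfB : ∀ᶠ n in atTop, ∀ y ∈ Metric.closedBall xstar c, |f n y| ≤ M := by
    have hVev : ∀ᶠ n in atTop, ∀ v ∈ V, f n v ≤ M₀ + 1 := by
      refine hVfin.eventually_all.2 fun v hv => ?_
      filter_upwards [habs v (hVD hv) 1 one_pos] with n hn
      have := abs_lt.1 hn
      linarith [hM₀ v hv, this.2]
    filter_upwards [hVev, habs xstar hxD 1 one_pos] with n hVn hxn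
    intro y hy
    have := bound_on_ball (hfconv n) hc0 hcBD (A := M₀ + 1) hVn y hy
    have h1 := abs_lt.1 hxn
    have h2 : |f n xstar| ≤ |flim xstar| + 1 := by
      have h := abs_sub_abs_le_abs_sub (f n xstar) (flim xstar)
      linarith [hxn.le]
    rw [hM]; linarith
  -- Lipschitz constant
  set K := 2 * M / R with hK
  have hK0 : 0 ≤ K := by positivity
  have hball_sub : Metric.closedBall xstar R ⊆ Metric.ball xstar (c - R) := by
    apply closedBall_subset_ball; rw [hc]; linarith
  have hlip : ∀ (g : (Fin q → ℝ) → ℝ), ConvexOn ℝ D g →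
      (∀ y ∈ Metric.closedBall xstar c, |g y| ≤ M) →
      ∀ x ∈ Metric.closedBall xstar R, ∀ y ∈ Metric.closedBall xstar R,
        |g x - g y| ≤ K * dist x y := by
    intro g hg hgB x hx y hy
    have hgball : ConvexOn ℝ (Metric.ball xstar c) g :=
      hg.subset (ball_subset_closedBall.trans hcBD) (convex_ball _ _)
    have hlipg := hgball.lipschitzOnWith_of_abs_le (M := M) hR0
      (fun a ha => hgB a (ball_subset_closedBall ha))
    have := hlipg.dist_le_mul x (hball_sub hx) y (hball_sub hy)
    rw [Real.dist_eq] at this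
    calc |g x - g y| ≤ ((2 * M / R).toNNReal : ℝ) * dist x y := this
      _ ≤ K * dist x y := by
          apply mul_le_mul_of_nonneg_right _ dist_nonneg
          rw [Real.coe_toNNReal _ (by positivity)]
  -- uniform convergence on closedBall xstar R
  have hunif : ∀ ε > 0, ∀ᶠ n in atTop,
      ∀ y ∈ Metric.closedBall xstar R, |f n y - flim y| ≤ ε := by
    intro ε hε
    set δ := ε / (3 * (K + 1)) with hδ
    have hδ0 : 0 < δ := by positivity
    have hKδ : K * δ ≤ ε / 3 := by
      rw [hδ, mul_comm, div_mul_eq_mul_div, div_le_div_iff₀ (by positivity) (by norm_num)]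
      nlinarith
    obtain ⟨t, hts, htfin, htcov⟩ :=
      finite_cover_balls_of_compact (isCompact_closedBall xstar R) hδ0
    have htev : ∀ᶠ n in atTop, ∀ p ∈ t, |f n p - flim p| < ε / 3 :=
      htfin.eventually_all.2 fun p hp =>
        habs p (hcBD (hRc (hts hp))) _ (by positivity)
    filter_upwards [hfB, htev] with n hBn htn
    intro y hy
    obtain ⟨p, hpt, hyp⟩ : ∃ p ∈ t, y ∈ Metric.ball p δ := by
      have := htcov hy
      simpa using this
    have hpball : p ∈ Metric.closedBall xstar R := hts hpt
    have hdyp : dist y p < δ := mem_ball.1 hyp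
    have l1 : |f n y - f n p| ≤ K * dist y p := hlip (f n) (hfconv n) hBn y hy p hpball
    have l2 : |flim p - flim y| ≤ K * dist p y := hlip flim hflimconv hflimB p hpball y hy
    have l3 : |f n p - flim p| < ε / 3 := htn p hpt
    have hd : K * dist y p ≤ ε / 3 :=
      le_trans (mul_le_mul_of_nonneg_left hdyp.le hK0) hKδ
    have hd' : K * dist p y ≤ ε / 3 := by rw [dist_comm]; exact hd
    have e1 := abs_lt.1 l3
    have e2 := abs_le.1 l1
    have e3 := abs_le.1 l2
    rw [abs_le]
    constructor <;> linarith
  -- sphere gap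
  obtain ⟨ε₀, hε₀, hsph⟩ : ∃ ε₀ > 0, ∀ z ∈ Metric.sphere xstar R, flim xstar + ε₀ ≤ flim z := by
    rcases (Metric.sphere xstar R).eq_empty_or_nonempty with h | h
    · exact ⟨1, one_pos, by simp [h]⟩
    · have hsub' : Metric.sphere xstar R ⊆ Metric.closedBall xstar R := sphere_subset_closedBall
      have hcont : ContinuousOn flim (Metric.sphere xstar R) := by
        have hgball : ConvexOn ℝ (Metric.ball xstar c) flim :=
          hflimconv.subset (ball_subset_closedBall.trans hcBD) (convex_ball _ _)
        have hlipg := hgball.lipschitzOnWith_of_abs_le (M := M) hR0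
          (fun a ha => hflimB a (ball_subset_closedBall ha))
        exact hlipg.continuousOn.mono (hsub'.trans hball_sub)
      obtain ⟨z₀, hz₀, hminz⟩ := (isCompact_sphere xstar R).exists_isMinOn h hcont
      have hz₀D : z₀ ∈ D := hcBD (hRc (hsub' hz₀))
      have hz₀ne : z₀ ≠ xstar := by
        intro hEq
        have := mem_sphere.1 hz₀
        rw [hEq] at this
        simp at this
        linarith
      have hlt : flim xstar < flim z₀ := by
        rcases lt_or_eq_of_le (hmin z₀ hz₀D) with h' | h'
        · exact h'
        · exfalso
          exact hz₀ne (huniq z₀ hz₀D (fun x hx => h' ▸ hmin x hx))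
      exact ⟨flim z₀ - flim xstar, by linarith,
        fun z hz => by linarith [isMinOn_iff.1 hminz z hz]⟩
  -- main estimate
  have key : ∀ ε' > 0, ∀ᶠ n in atTop, |(⨅ x : D, f n x) - flim xstar| ≤ ε' := by
    intro ε' hε'
    set δ := min ε' (ε₀ / 2) with hδ
    have hδ0 : 0 < δ := lt_min hε' (by linarith)
    have hδε' : δ ≤ ε' := min_le_left _ _
    have hδε₀ : 2 * δ ≤ ε₀ := by
      have := min_le_right ε' (ε₀ / 2); linarith
    filter_upwards [hunif δ hδ0, habs xstar hxD δ hδ0] with n hu hxs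
    have hxs' := abs_lt.1 hxs
    have hlb : ∀ y ∈ D, flim xstar - ε' ≤ f n y := by
      intro y hy
      by_cases hyb : dist y xstar ≤ R
      · have h1 := abs_le.1 (hu y (mem_closedBall.2 hyb))
        have h2 := hmin y hy
        linarith
      · push_neg at hyb
        have hd0 : (0:ℝ) < dist y xstar := lt_trans hR0 hyb
        set s := R / dist y xstar with hs
        have hs0 : 0 < s := by positivity
        have hs1 : s < 1 := by rw [hs, div_lt_one hd0]; exact hyb
        set z := (1 - s) • xstar + s • y with hz
        have hzsph : dist z xstar = R := by
          have h1 : z - xstar = s • (y - xstar) := by rw [hz]; module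
          rw [dist_eq_norm, h1, norm_smul, Real.norm_eq_abs, abs_of_pos hs0, hs,
            ← dist_eq_norm, div_mul_cancel₀ _ hd0.ne']
        have hzD : z ∈ D := hcBD (hRc (mem_closedBall.2 hzsph.le))
        have h1 : f n z ≤ (1 - s) * f n xstar + s * f n y := by
          have h := (hfconv n).2 hxD hy (sub_nonneg.2 hs1.le) hs0.le
            (by ring : 1 - s + s = 1)
          rw [← hz] at h
          simpa [smul_eq_mul] using h
        have h2 : flim xstar + ε₀ - δ ≤ f n z := by
          have ha := abs_le.1 (hu z (mem_closedBall.2 hzsph.le))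
          have hb := hsph z (mem_sphere.2 hzsph)
          linarith
        have h3 : f n xstar ≤ flim xstar + δ := by linarith
        have h4 : s * flim xstar ≤ s * f n y := by nlinarith
        have h5 : flim xstar ≤ f n y := le_of_mul_le_mul_left h4 hs0
        linarith
    have hbdd : BddBelow (Set.range fun x : D => f n x) :=
      ⟨flim xstar - ε', by rintro _ ⟨x, rfl⟩; exact hlb x x.2⟩
    have hub : (⨅ x : D, f n x) ≤ flim xstar + ε' := by
      have := ciInf_le hbdd ⟨xstar, hxD⟩
      simp only at this
      linarith
    have hlb' : flim xstar - ε' ≤ ⨅ x : D, f n x :=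
      le_ciInf fun x => hlb x x.2
    rw [abs_le]
    constructor <;> linarith
  -- conclude
  rw [Metric.tendsto_atTop]
  intro ε hε
  obtain ⟨N, hN⟩ := eventually_atTop.1 (key (ε / 2) (by linarith))
  exact ⟨N, fun n hn => by rw [Real.dist_eq]; linarith [hN n hn]⟩
end

section
/- (Lemma C.1, sampling subsets with replacement.) Let e_1, …, e_n be i.i.d. square-integrable random vectors in ℝ^p with mean zero and covariance matrix Σ, and let C^{(j)} and C^{(k)} be independent random subsets of {1,…,n}, each uniformly distributed over the m-element subsets of {1,…,n} with 1 ≤ m < n, and independent of (e_1,…,e_n). Then Cov(√n·ω(C^{(j)}), √n·ω(C^{(k)})) = 0, while Var(√n·ω(C^{(j)})) = ((n−m)/m)·Σ; that is, the randomization variables of distinct machines are exactly uncorrelated when the subsets are drawn independently with replacement. -/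
/-!
Write `√n·ω(C) = ∑ᵢ wᵢ(C) eᵢ` with `wᵢ(C) = √n (1/n − 1_{i∈C}/m)`. Since the subsets are
independent of the `eᵢ` and `E[eᵢ eⱼᵀ] = δᵢⱼ Σ`, the covariance of two such sums for subsets
`C`, `D` collapses to `∑ᵢ E[wᵢ(C) wᵢ(D)] Σ`. A uniform `m`-subset contains `i` with probability
`m/n`, so `E wᵢ(C) = 0` and `E wᵢ(C)² = 1/m − 1/n`: for independent `C`, `D` every term
vanishes, and for `C = D` the sum is `n (1/m − 1/n) Σ = ((n − m)/m) Σ`.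
-/

open MeasureTheory ProbabilityTheory

noncomputable def covar {Ω : Type*} [MeasurableSpace Ω] (P : Measure Ω) (X Y : Ω → ℝ) : ℝ :=
  ∫ ω, (X ω - ∫ ω', X ω' ∂P) * (Y ω - ∫ ω', Y ω' ∂P) ∂P

open Finset

section IndependentCoefficients

variable {Ω β γ ι : Type*} [MeasurableSpace Ω] {P : Measure Ω} [MeasurableSpace β]
  [MeasurableSpace γ] {Z : Ω → β} {V : Ω → γ}

lemma integral_comp_mul_comp_of_indepFun (hZV : IndepFun Z V P) (hZ : Measurable Z)
    {f : β → ℝ} {x : γ → ℝ} (hf : Measurable f) (hx : Measurable x)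
    (hxV : AEStronglyMeasurable (fun ω => x (V ω)) P) :
    ∫ ω, f (Z ω) * x (V ω) ∂P = (∫ ω, f (Z ω) ∂P) * ∫ ω, x (V ω) ∂P :=
  (hZV.comp hf hx).integral_mul_eq_mul_integral (hf.comp hZ).aestronglyMeasurable hxV

variable [IsProbabilityMeasure P] [Finite β] [MeasurableSingletonClass β] [Fintype ι]

lemma integrable_comp_mul_comp_of_indepFun (hZV : IndepFun Z V P) (hZ : Measurable Z)
    (f : β → ℝ) {x : γ → ℝ} (hx : Measurable x) (hxV : Integrable (fun ω => x (V ω)) P) :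
    Integrable (fun ω => f (Z ω) * x (V ω)) P :=
  (hZV.comp (measurable_of_countable f) hx).integrable_mul
    (Integrable.of_finite.comp_measurable hZ) hxV

lemma integral_sum_mul_eq_zero_of_indepFun (hZV : IndepFun Z V P) (hZ : Measurable Z)
    (f : ι → β → ℝ) {x : ι → γ → ℝ} (hx : ∀ i, Measurable (x i))
    (hxV : ∀ i, Integrable (fun ω => x i (V ω)) P) (hx0 : ∀ i, ∫ ω, x i (V ω) ∂P = 0) :
    ∫ ω, ∑ i, f i (Z ω) * x i (V ω) ∂P = 0 := by
  rw [integral_finsetSum _ fun i _ =>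
    integrable_comp_mul_comp_of_indepFun hZV hZ (f i) (hx i) (hxV i)]
  refine sum_eq_zero fun i _ => ?_
  rw [integral_comp_mul_comp_of_indepFun hZV hZ (measurable_of_countable (f i)) (hx i)
    (hxV i).aestronglyMeasurable, hx0, mul_zero]

lemma covar_sum_mul_sum_of_indepFun (hZV : IndepFun Z V P) (hZ : Measurable Z)
    (f g : ι → β → ℝ) {x y : ι → γ → ℝ} (hx : ∀ i, Measurable (x i)) (hy : ∀ i, Measurable (y i))
    (hxV : ∀ i, Integrable (fun ω => x i (V ω)) P) (hyV : ∀ i, Integrable (fun ω => y i (V ω)) P)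
    (hxyV : ∀ i j, Integrable (fun ω => x i (V ω) * y j (V ω)) P)
    (hx0 : ∀ i, ∫ ω, x i (V ω) ∂P = 0) (hy0 : ∀ i, ∫ ω, y i (V ω) ∂P = 0)
    (huncorr : ∀ i j, i ≠ j → ∫ ω, x i (V ω) * y j (V ω) ∂P = 0) :
    covar P (fun ω => ∑ i, f i (Z ω) * x i (V ω)) (fun ω => ∑ j, g j (Z ω) * y j (V ω))
      = ∑ i, (∫ ω, f i (Z ω) * g i (Z ω) ∂P) * ∫ ω, x i (V ω) * y i (V ω) ∂P := by
  have hterm : ∀ i j, ∫ ω, (f i (Z ω) * g j (Z ω)) * (x i (V ω) * y j (V ω)) ∂P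
      = (∫ ω, f i (Z ω) * g j (Z ω) ∂P) * ∫ ω, x i (V ω) * y j (V ω) ∂P := fun i j =>
    integral_comp_mul_comp_of_indepFun hZV hZ (f := fun s => f i s * g j s)
      (measurable_of_countable _) ((hx i).mul (hy j)) (hxyV i j).aestronglyMeasurable
  have hint : ∀ i j, Integrable
      (fun ω => (f i (Z ω) * g j (Z ω)) * (x i (V ω) * y j (V ω))) P := fun i j =>
    integrable_comp_mul_comp_of_indepFun hZV hZ (fun s => f i s * g j s)
      ((hx i).mul (hy j)) (hxyV i j)
  have hexpand : ∀ ω, (∑ i, f i (Z ω) * x i (V ω)) * (∑ j, g j (Z ω) * y j (V ω))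
      = ∑ i, ∑ j, (f i (Z ω) * g j (Z ω)) * (x i (V ω) * y j (V ω)) := fun ω => by
    rw [sum_mul_sum]
    exact sum_congr rfl fun i _ => sum_congr rfl fun j _ => by ring
  rw [covar, integral_sum_mul_eq_zero_of_indepFun hZV hZ f hx hxV hx0,
    integral_sum_mul_eq_zero_of_indepFun hZV hZ g hy hyV hy0]
  simp only [sub_zero, hexpand]
  rw [integral_finsetSum _ fun i _ => integrable_finsetSum _ fun j _ => hint i j]
  refine sum_congr rfl fun i _ => ?_
  rw [integral_finsetSum _ fun j _ => hint i j, sum_eq_single i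
    (fun j _ hji => by rw [hterm, huncorr i j hji.symm, mul_zero]) (by simp), hterm]

end IndependentCoefficients

section NoiseVectors

variable {Ω β ι κ : Type*} [MeasurableSpace Ω] {P : Measure Ω} [IsProbabilityMeasure P]
  [MeasurableSpace β] [Finite β] [MeasurableSingletonClass β] [Fintype ι]

lemma covar_sum_mul_sum_of_iIndepFun {e : ι → Ω → κ → ℝ} {Sig : Matrix κ κ ℝ}
    (hindep : iIndepFun e P) (hL2 : ∀ i a, MemLp (fun ω => e i ω a) 2 P)
    (hmean : ∀ i a, ∫ ω, e i ω a ∂P = 0)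
    (hcov : ∀ i a b, covar P (fun ω => e i ω a) (fun ω => e i ω b) = Sig a b)
    {Z : Ω → β} (hZ : Measurable Z) (hZe : IndepFun Z (fun ω i => e i ω) P)
    (f g : ι → β → ℝ) (a b : κ) :
    covar P (fun ω => ∑ i, f i (Z ω) * e i ω a) (fun ω => ∑ j, g j (Z ω) * e j ω b)
      = (∑ i, ∫ ω, f i (Z ω) * g i (Z ω) ∂P) * Sig a b := by
  have huncorr : ∀ i j, i ≠ j → ∫ ω, e i ω a * e j ω b ∂P = 0 := fun i j hij =>
    (((hindep.indepFun hij).comp (measurable_pi_apply a) (measurable_pi_apply b))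
      |>.integral_mul_eq_mul_integral (hL2 i a).aestronglyMeasurable
        (hL2 j b).aestronglyMeasurable).trans (by rw [Function.comp_def, hmean, zero_mul])
  rw [covar_sum_mul_sum_of_indepFun hZe hZ f g (x := fun i v => v i a) (y := fun j v => v j b)
    (fun i => by fun_prop) (fun j => by fun_prop)
    (fun i => (hL2 i a).integrable one_le_two) (fun j => (hL2 j b).integrable one_le_two)
    (fun i j => (hL2 i a).integrable_mul (hL2 j b)) (fun i => hmean i a) (fun j => hmean j b)
    huncorr, sum_mul]
  refine sum_congr rfl fun i _ => ?_
  rw [← hcov i a b, covar, hmean, hmean]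
  simp only [sub_zero]

end NoiseVectors

section UniformSubset

variable {Ω α : Type*} [MeasurableSpace Ω] {P : Measure Ω} [Fintype α]

lemma integral_comp_of_map_eq_uniformOfFinset [IsProbabilityMeasure P] [MeasurableSpace α]
    [MeasurableSingletonClass α] {C : Ω → α}
    (hC : Measurable C) {T : Finset α} {hT : T.Nonempty}
    (hlaw : P.map C = (PMF.uniformOfFinset T hT).toMeasure) (g : α → ℝ) :
    ∫ ω, g (C ω) ∂P = (∑ s ∈ T, g s) / #T := by
  classical
  rw [← integral_map hC.aemeasurable (measurable_of_countable g).aestronglyMeasurable, hlaw,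
    PMF.integral_eq_sum]
  simp only [PMF.uniformOfFinset_apply, apply_ite ENNReal.toReal, ENNReal.toReal_inv,
    ENNReal.toReal_natCast, ENNReal.toReal_zero, smul_eq_mul, ite_mul, zero_mul]
  rw [sum_ite_mem, univ_inter, ← mul_sum, inv_mul_eq_div]

lemma card_filter_mem_powersetCard_mul_card [DecidableEq α] {m : ℕ} (hm : 1 ≤ m) (i : α) :
    #{s ∈ powersetCard m univ | i ∈ s} * Fintype.card α = m * (Fintype.card α).choose m := by
  have hcount := card_filter_powersetCard_subset {i} univ m (subset_univ _) (by simpa using hm)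
  simp only [singleton_subset_iff, card_singleton, card_univ] at hcount
  obtain ⟨k, hk⟩ : ∃ k, Fintype.card α = k + 1 :=
    Nat.exists_eq_add_one_of_ne_zero (Fintype.card_pos_iff.2 ⟨i⟩).ne'
  obtain ⟨l, rfl⟩ : ∃ l, m = l + 1 := Nat.exists_eq_add_one_of_ne_zero (by omega)
  rw [hcount, hk, Nat.add_sub_cancel, Nat.add_sub_cancel, mul_comm, Nat.add_one_mul_choose_eq,
    mul_comm]

lemma integral_ite_mem_of_map_eq_uniform [IsProbabilityMeasure P] [DecidableEq α]
    [MeasurableSpace (Finset α)] [MeasurableSingletonClass (Finset α)] {C : Ω → Finset α}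
    (hC : Measurable C) {m : ℕ} (hm : 1 ≤ m) {T : Finset (Finset α)} {hT : T.Nonempty}
    (hTm : T = powersetCard m univ) (hlaw : P.map C = (PMF.uniformOfFinset T hT).toMeasure)
    (i : α) (u v : ℝ) :
    ∫ ω, (if i ∈ C ω then u else v) ∂P
      = m / Fintype.card α * u + (1 - m / Fintype.card α) * v := by
  have hcount : (#{s ∈ T | i ∈ s} : ℝ) * Fintype.card α = m * #T := by
    rw [hTm, card_powersetCard, card_univ]
    exact_mod_cast card_filter_mem_powersetCard_mul_card hm i
  have hsplit : (#{s ∈ T | i ∈ s} : ℝ) + #{s ∈ T | i ∉ s} = #T := by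
    exact_mod_cast card_filter_add_card_filter_not (s := T) (fun s => i ∈ s)
  have hT0 : (#T : ℝ) ≠ 0 := by exact_mod_cast hT.card_ne_zero
  have hα : (Fintype.card α : ℝ) ≠ 0 := by exact_mod_cast (Fintype.card_pos_iff.2 ⟨i⟩).ne'
  rw [integral_comp_of_map_eq_uniformOfFinset hC hlaw (fun s => if i ∈ s then u else v),
    sum_ite, sum_const, sum_const, nsmul_eq_mul, nsmul_eq_mul]
  field_simp
  linear_combination (u - v) * hcount + Fintype.card α * v * hsplit

end UniformSubset

section RandomizationWeight

/-- The coefficient of `e i` in `√n · ω(C)`. -/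
noncomputable def randomizationWeight (n m : ℕ) (C : Finset (Fin n)) (i : Fin n) : ℝ :=
  if i ∈ C then √n * (1 / n - 1 / m) else √n / n

lemma sqrt_mul_randomization_eq_sum (n m : ℕ) (C : Finset (Fin n)) (g : Fin n → ℝ) :
    √n * ((1 / (n : ℝ)) * ∑ i, g i - (1 / (m : ℝ)) * ∑ i ∈ C, g i)
      = ∑ i, randomizationWeight n m C i * g i := by
  classical
  have hsumC : ∑ i ∈ C, g i = ∑ i, if i ∈ C then g i else 0 := by rw [sum_ite_mem, univ_inter]
  rw [hsumC, mul_sum, mul_sum, ← sum_sub_distrib, mul_sum]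
  refine sum_congr rfl fun i _ => ?_
  unfold randomizationWeight
  split_ifs <;> ring

variable {Ω : Type*} [MeasurableSpace Ω] {P : Measure Ω} [IsProbabilityMeasure P] {n m : ℕ}
  [MeasurableSpace (Finset (Fin n))] [MeasurableSingletonClass (Finset (Fin n))]
  {C : Ω → Finset (Fin n)} {T : Finset (Finset (Fin n))} {hT : T.Nonempty}

lemma integral_randomizationWeight (hC : Measurable C) (hm : 1 ≤ m)
    (hTm : T = powersetCard m univ) (hlaw : P.map C = (PMF.uniformOfFinset T hT).toMeasure)
    (i : Fin n) : ∫ ω, randomizationWeight n m (C ω) i ∂P = 0 := by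
  have hn : (n : ℝ) ≠ 0 := by exact_mod_cast i.pos.ne'
  have hm0 : (m : ℝ) ≠ 0 := by exact_mod_cast (by omega : m ≠ 0)
  simp only [randomizationWeight]
  rw [integral_ite_mem_of_map_eq_uniform hC hm hTm hlaw, Fintype.card_fin]
  field_simp
  ring

lemma integral_randomizationWeight_mul_of_indepFun {D : Ω → Finset (Fin n)}
    (hC : Measurable C) (hD : Measurable D) (hCD : IndepFun C D P) (hm : 1 ≤ m)
    (hTm : T = powersetCard m univ) (hlaw : P.map C = (PMF.uniformOfFinset T hT).toMeasure)
    (i : Fin n) :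
    ∫ ω, randomizationWeight n m (C ω) i * randomizationWeight n m (D ω) i ∂P = 0 := by
  have hweight : Measurable fun s => randomizationWeight n m s i := measurable_of_countable _
  rw [integral_comp_mul_comp_of_indepFun hCD hC hweight hweight
    (hweight.comp hD).aestronglyMeasurable, integral_randomizationWeight hC hm hTm hlaw, zero_mul]

lemma integral_randomizationWeight_mul_self (hC : Measurable C) (hm : 1 ≤ m)
    (hTm : T = powersetCard m univ) (hlaw : P.map C = (PMF.uniformOfFinset T hT).toMeasure)
    (i : Fin n) :
    ∫ ω, randomizationWeight n m (C ω) i * randomizationWeight n m (C ω) i ∂P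
      = 1 / m - 1 / n := by
  have hn : (n : ℝ) ≠ 0 := by exact_mod_cast i.pos.ne'
  have hm0 : (m : ℝ) ≠ 0 := by exact_mod_cast (by omega : m ≠ 0)
  have hsqrt : √(n : ℝ) ^ 2 = n := Real.sq_sqrt n.cast_nonneg
  simp only [randomizationWeight, ite_mul_ite]
  rw [integral_ite_mem_of_map_eq_uniform hC hm hTm hlaw, Fintype.card_fin]
  field_simp
  rw [hsqrt]
  ring

end RandomizationWeight

theorem sampling_with_replacement_uncorrelated_general
    {Ω : Type*} [MeasurableSpace Ω] (P : Measure Ω) [IsProbabilityMeasure P]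
    (n p m : ℕ) (hm1 : 1 ≤ m)
    (e : Fin n → Ω → (Fin p → ℝ))
    (Sig : Matrix (Fin p) (Fin p) ℝ)
    (hindep : iIndepFun e P)
    (hL2 : ∀ i a, MemLp (fun ω => e i ω a) 2 P)
    (hmean : ∀ i a, ∫ ω, e i ω a ∂P = 0)
    (hcov : ∀ i a b, covar P (fun ω => e i ω a) (fun ω => e i ω b) = Sig a b)
    [MeasurableSpace (Finset (Fin n))] [MeasurableSingletonClass (Finset (Fin n))]
    (Cj Ck : Ω → Finset (Fin n)) (hCj : Measurable Cj) (hCk : Measurable Ck)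
    (T : Finset (Finset (Fin n)))
    (hT : T = Finset.univ.filter (fun s : Finset (Fin n) => s.card = m))
    (hTne : T.Nonempty)
    (hlawCj : P.map Cj = (PMF.uniformOfFinset T hTne).toMeasure)
    (hindepCC : IndepFun Cj Ck P)
    (hindepCe : IndepFun (fun ω => (Cj ω, Ck ω)) (fun ω i => e i ω) P)
    (Wj Wk : Ω → Fin p → ℝ)
    (hWj : ∀ ω a, Wj ω a = Real.sqrt n *
      ((1 / (n : ℝ)) * ∑ i, e i ω a - (1 / (m : ℝ)) * ∑ i ∈ Cj ω, e i ω a))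
    (hWk : ∀ ω a, Wk ω a = Real.sqrt n *
      ((1 / (n : ℝ)) * ∑ i, e i ω a - (1 / (m : ℝ)) * ∑ i ∈ Ck ω, e i ω a)) :
    (∀ a b, covar P (fun ω => Wj ω a) (fun ω => Wk ω b) = 0) ∧
    (∀ a b, covar P (fun ω => Wj ω a) (fun ω => Wj ω b) =
      (((n : ℝ) - m) / m) * Sig a b) := by
  have hTm : T = powersetCard m univ := by ext s; simp [hT]
  have hn : (n : ℝ) ≠ 0 := by
    have : m ≤ n := by simpa [hTm] using hTne
    exact_mod_cast (by omega : n ≠ 0)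
  simp only [hWj, hWk, sqrt_mul_randomization_eq_sum]
  have hcovW := covar_sum_mul_sum_of_iIndepFun hindep hL2 hmean hcov (hCj.prodMk hCk) hindepCe
  refine ⟨fun a b => ?_, fun a b => ?_⟩
  · refine (hcovW (fun i s => randomizationWeight n m s.1 i)
      (fun i s => randomizationWeight n m s.2 i) a b).trans ?_
    simp only [integral_randomizationWeight_mul_of_indepFun hCj hCk hindepCC hm1 hTm hlawCj,
      sum_const_zero, zero_mul]
  · refine (hcovW (fun i s => randomizationWeight n m s.1 i)
      (fun i s => randomizationWeight n m s.1 i) a b).trans ?_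
    simp only [integral_randomizationWeight_mul_self hCj hm1 hTm hlawCj, sum_const, card_univ,
      Fintype.card_fin, nsmul_eq_mul]
    field_simp

/-- Lemma C.1, sampling subsets with replacement: for i.i.d. mean-zero square-integrable
random vectors `e 1, …, e n` in `ℝ^p` with covariance matrix `Sig`, and independent random
subsets `Cj`, `Ck`, each uniform over the `m`-element subsets of `{1,…,n}` and independent
of `(e 1, …, e n)`, the randomization variables `√n·ω(Cj)` and `√n·ω(Ck)` of distinct
machines are exactly uncorrelated: `Cov(√n·ω(Cj), √n·ω(Ck)) = 0`, while
`Var(√n·ω(Cj)) = ((n−m)/m)·Sig`, where `ω(C) = (1/n)·∑ᵢ eᵢ − (1/m)·∑_{i∈C} eᵢ`. -/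
theorem sampling_with_replacement_uncorrelated
    {Ω : Type*} [MeasurableSpace Ω] (P : Measure Ω) [IsProbabilityMeasure P]
    (n p m : ℕ) (hm1 : 1 ≤ m) (hmn : m < n)
    (e : Fin n → Ω → (Fin p → ℝ))
    (Sig : Matrix (Fin p) (Fin p) ℝ)
    (hmeas : ∀ i, Measurable (e i))
    (hindep : iIndepFun e P)
    (hident : ∀ i j, IdentDistrib (e i) (e j) P P)
    (hL2 : ∀ i a, MemLp (fun ω => e i ω a) 2 P)
    (hmean : ∀ i a, ∫ ω, e i ω a ∂P = 0)
    (hcov : ∀ i a b, covar P (fun ω => e i ω a) (fun ω => e i ω b) = Sig a b)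
    [MeasurableSpace (Finset (Fin n))] [MeasurableSingletonClass (Finset (Fin n))]
    (Cj Ck : Ω → Finset (Fin n)) (hCj : Measurable Cj) (hCk : Measurable Ck)
    (T : Finset (Finset (Fin n)))
    (hT : T = Finset.univ.filter (fun s : Finset (Fin n) => s.card = m))
    (hTne : T.Nonempty)
    (hlawCj : P.map Cj = (PMF.uniformOfFinset T hTne).toMeasure)
    (hlawCk : P.map Ck = (PMF.uniformOfFinset T hTne).toMeasure)
    (hindepCC : IndepFun Cj Ck P)
    (hindepCe : IndepFun (fun ω => (Cj ω, Ck ω)) (fun ω i => e i ω) P)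
    (Wj Wk : Ω → Fin p → ℝ)
    (hWj : ∀ ω a, Wj ω a = Real.sqrt n *
      ((1 / (n : ℝ)) * ∑ i, e i ω a - (1 / (m : ℝ)) * ∑ i ∈ Cj ω, e i ω a))
    (hWk : ∀ ω a, Wk ω a = Real.sqrt n *
      ((1 / (n : ℝ)) * ∑ i, e i ω a - (1 / (m : ℝ)) * ∑ i ∈ Ck ω, e i ω a)) :
    (∀ a b, covar P (fun ω => Wj ω a) (fun ω => Wk ω b) = 0) ∧
    (∀ a b, covar P (fun ω => Wj ω a) (fun ω => Wj ω b) =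
      (((n : ℝ) - m) / m) * Sig a b) :=
  sampling_with_replacement_uncorrelated_general P n p m hm1 e Sig hindep hL2 hmean hcov Cj Ck hCj
    hCk T hT hTne hlawCj hindepCC hindepCe Wj Wk hWj hWk
end
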